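/- Let G = (V,E) be a ℤ^d-periodic graph with quotient graph G_f on vertex set V_f and edge index map σ, and let V₀ ⊆ V_f be nonempty with induced subgraph G₀ of G_f. Then the following are equivalent: (a) the lift of G₀, namely the induced subgraph of G on the vertex set {u ∈ V : ũ ∈ V₀}, contains a vertex path having infinitely many distinct vertices; (b) G₀ contains a vertex loop (v₀, …, v_ℓ) with Σ_{j=1}^{ℓ} σ(v_{j−1}, v_j) ≠ 0 in ℤ^d. -/
import Mathlib


/-- **Lemma 3.1, (b) ⇔ (c).** Let `G` be a `ℤ^d`-periodic graph, `V_f` a set of orbit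
representatives (the vertex set of the quotient graph), and `V₀ ⊆ V_f` nonempty. Then
the lift of the induced subgraph `G₀` of the quotient graph (i.e. the induced subgraph
of `G` on all translates of `V₀`) contains a vertex path with infinitely many distinct
vertices if and only if `G₀` contains a vertex loop whose total edge index is nonzero
in `ℤ^d`; a loop in `G₀` is a sequence `p 0, …, p ℓ` in `V₀` with `p 0 = p ℓ` together
with indices `n i ∈ ℤ^d` such that `p i ∼ (n i) +ᵥ p (i+1)` in `G`. -/
theorem lift_has_infinite_path_iff_exists_loop_with_nonzero_index
    {d : ℕ} {V : Type} (G : SimpleGraph V) [AddAction (Fin d → ℤ) V]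
    -- the action is free
    (hfree : ∀ (n : Fin d → ℤ) (v : V), n +ᵥ v = v → n = 0)
    -- the action preserves adjacency
    (hadj : ∀ (n : Fin d → ℤ) (u v : V), G.Adj u v → G.Adj (n +ᵥ u) (n +ᵥ v))
    -- the graph is locally finite
    (hlocfin : ∀ v : V, {u : V | G.Adj u v}.Finite)
    -- finitely many orbits of vertices
    (hvorb : ∃ F : Finset V, ∀ v : V, ∃ u ∈ F, ∃ n : Fin d → ℤ, v = n +ᵥ u)
    -- finitely many orbits of edges
    (heorb : ∃ F : Finset (V × V), ∀ u v : V, G.Adj u v →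
      ∃ e ∈ F, ∃ n : Fin d → ℤ, u = n +ᵥ e.1 ∧ v = n +ᵥ e.2)
    -- no vertex is adjacent to one of its own translates
    (hnta : ∀ (u : V) (n : Fin d → ℤ), ¬ G.Adj u (n +ᵥ u))
    -- for every pair of vertices there is at most one connecting translate
    (huniq : ∀ (u v : V) (n n' : Fin d → ℤ),
      G.Adj u (n +ᵥ v) → G.Adj u (n' +ᵥ v) → n = n')
    -- `Vf` is a set of representatives: each vertex has a unique decomposition
    (Vf : Set V)
    (hVf : ∀ v : V, ∃! w : Vf × (Fin d → ℤ), v = w.2 +ᵥ (w.1 : V))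
    -- `V₀` is a nonempty subset of `Vf`
    (V₀ : Set V) (hV₀f : V₀ ⊆ Vf) (hV₀ne : V₀.Nonempty) :
    -- (a) the lift of `G₀` contains a vertex path with infinitely many distinct vertices
    (∃ p : ℕ → V, (∀ k : ℕ, ∃ w ∈ V₀, ∃ n : Fin d → ℤ, p k = n +ᵥ w) ∧
        (∀ k : ℕ, G.Adj (p k) (p (k + 1))) ∧ (Set.range p).Infinite) ↔
      -- (b) `G₀` contains a vertex loop with nonzero total edge index
      (∃ (ℓ : ℕ) (p : Fin (ℓ + 1) → V) (n : Fin ℓ → (Fin d → ℤ)),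
        (∀ i, p i ∈ V₀) ∧ p 0 = p (Fin.last ℓ) ∧
        (∀ i : Fin ℓ, G.Adj (p i.castSucc) ((n i) +ᵥ p i.succ)) ∧
        ∑ i : Fin ℓ, n i ≠ 0) := by
  classical
  constructor
  · rintro ⟨p, hmem, hpadj, hinf⟩
    choose w hwV₀ nn hn using hmem
    -- `Vf` is finite
    obtain ⟨F, hF⟩ := hvorb
    have hVfFin : Vf.Finite := by
      rw [← Set.finite_coe_iff]
      choose f hfF g hg using fun v : Vf => hF (v : V)
      have hinj : Function.Injective fun v : Vf => (⟨f v, hfF v⟩ : F) := by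
        intro a b hab
        have hfab : f a = f b := congrArg Subtype.val hab
        have h1 : (b : V) = (0 : Fin d → ℤ) +ᵥ (b : V) := (zero_vadd _ _).symm
        have h2 : (b : V) = (g b - g a) +ᵥ (a : V) := by
          rw [hg a, hg b, hfab, vadd_vadd, sub_add_cancel]
        have h3 := (hVf (b : V)).unique (y₁ := (b, 0)) (y₂ := (a, g b - g a)) h1 h2
        exact (congrArg Prod.fst h3).symm
      exact Finite.of_injective _ hinj
    have hwFin : (Set.range w).Finite :=
      (hVfFin.subset hV₀f).subset (Set.range_subset_iff.mpr hwV₀)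
    -- pigeonhole: two path vertices over the same quotient vertex with distinct indices
    have hkey : ∃ k k', w k = w k' ∧ nn k ≠ nn k' := by
      by_contra hc
      push_neg at hc
      apply hinf
      have hpw : ∀ k k', w k = w k' → p k = p k' := fun k k' h => by
        rw [hn k, hn k', h, hc k k' h]
      have hsub : Set.range p ⊆ (fun v => p (Function.invFun w v)) '' Set.range w := by
        rintro x ⟨k, rfl⟩
        exact ⟨w k, ⟨k, rfl⟩, hpw _ _ (Function.invFun_eq ⟨k, rfl⟩)⟩
      exact (hwFin.image _).subset hsub
    obtain ⟨k, k', hww, hnn⟩ := hkey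
    suffices main : ∀ a b : ℕ, a < b → w a = w b → nn a ≠ nn b →
        (∃ (ℓ : ℕ) (p : Fin (ℓ + 1) → V) (n : Fin ℓ → (Fin d → ℤ)),
          (∀ i, p i ∈ V₀) ∧ p 0 = p (Fin.last ℓ) ∧
          (∀ i : Fin ℓ, G.Adj (p i.castSucc) ((n i) +ᵥ p i.succ)) ∧
          ∑ i : Fin ℓ, n i ≠ 0) by
      rcases lt_or_gt_of_ne (show k ≠ k' from fun h => hnn (by rw [h])) with h | h
      · exact main k k' h hww hnn
      · exact main k' k h hww.symm (Ne.symm hnn)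
    intro a b hab hwab hnab
    have hLb : a + (b - a) = b := by omega
    refine ⟨b - a, fun i => w (a + (i : ℕ)), fun i => nn (a + (i : ℕ) + 1) - nn (a + (i : ℕ)),
      fun i => hwV₀ _, ?_, ?_, ?_⟩
    · show w (a + ((0 : Fin (b - a + 1)) : ℕ)) = w (a + ((Fin.last (b - a)) : ℕ))
      rw [Fin.val_zero, Fin.val_last, add_zero, hLb]
      exact hwab
    · intro i
      have h2 : G.Adj (nn (a + (i : ℕ)) +ᵥ w (a + (i : ℕ)))
          (nn (a + (i : ℕ) + 1) +ᵥ w (a + (i : ℕ) + 1)) := by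
        rw [← hn, ← hn]; exact hpadj _
      have h3 := hadj (-(nn (a + (i : ℕ)))) _ _ h2
      rw [vadd_vadd, vadd_vadd, neg_add_cancel, zero_vadd, neg_add_eq_sub] at h3
      simpa [Fin.coe_castSucc, Fin.val_succ, ← add_assoc] using h3
    · have htel : ∑ i : Fin (b - a), (nn (a + (i : ℕ) + 1) - nn (a + (i : ℕ)))
          = nn (a + (b - a)) - nn (a + 0) := by
        rw [Fin.sum_univ_eq_sum_range (fun j => nn (a + j + 1) - nn (a + j)) (b - a)]
        exact Finset.sum_range_sub (fun j => nn (a + j)) (b - a)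
      rw [htel, add_zero, hLb]
      exact sub_ne_zero.mpr (Ne.symm hnab)
  · rintro ⟨L, p, n, hmemL, hloop, hadjL, hsum⟩
    have hL : 0 < L := by
      rcases Nat.eq_zero_or_pos L with h | h
      · subst h; simp at hsum
      · exact h
    set M : Fin d → ℤ := ∑ i : Fin L, n i with hM
    set N : ℕ → (Fin d → ℤ) := fun j => n ⟨j % L, Nat.mod_lt j hL⟩ with hN
    set S : ℕ → (Fin d → ℤ) := fun j => ∑ i ∈ Finset.range j, N i with hS
    set idx : ℕ → Fin (L + 1) :=
      fun j => ⟨j % L, lt_trans (Nat.mod_lt j hL) (Nat.lt_succ_self L)⟩ with hidx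
    refine ⟨fun j => S j +ᵥ p (idx j), fun j => ⟨p (idx j), hmemL _, S j, rfl⟩, ?_, ?_⟩
    · -- adjacency
      intro j
      have hstep := hadjL ⟨j % L, Nat.mod_lt j hL⟩
      have h2 := hadj (S j) _ _ hstep
      rw [vadd_vadd] at h2
      have hc1 : p (idx j) = p (Fin.castSucc ⟨j % L, Nat.mod_lt j hL⟩) := rfl
      have hSsucc : S (j + 1) = S j + N j := Finset.sum_range_succ N j
      have hNj : N j = n ⟨j % L, Nat.mod_lt j hL⟩ := rfl
      have hc2 : p (idx (j + 1)) = p (Fin.succ ⟨j % L, Nat.mod_lt j hL⟩) := by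
        have hd := Nat.div_add_mod j L
        have e1 : j + 1 = L * (j / L) + (j % L + 1) := by omega
        by_cases h : j % L + 1 < L
        · congr 1
          apply Fin.ext
          show (j + 1) % L = j % L + 1
          rw [e1, Nat.mul_add_mod, Nat.mod_eq_of_lt h]
        · have hr := Nat.mod_lt j hL
          have hE : j % L + 1 = L := by omega
          have h0 : (j + 1) % L = 0 := by rw [e1, Nat.mul_add_mod, hE, Nat.mod_self]
          have hidx0 : idx (j + 1) = 0 := Fin.ext (by show (j + 1) % L = 0; exact h0)
          rw [hidx0, hloop]
          congr 1
          apply Fin.ext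
          show L = j % L + 1
          omega
      show G.Adj (S j +ᵥ p (idx j)) (S (j + 1) +ᵥ p (idx (j + 1)))
      rw [hc1, hc2, hSsucc, hNj]
      exact h2
    · -- infinitude
      have hper : ∀ k i, i < L → N (k * L + i) = N i := by
        intro k i hi
        apply congrArg n
        apply Fin.ext
        show (k * L + i) % L = i % L
        rw [Nat.mul_comm, Nat.mul_add_mod]
      have hMsum : ∑ i ∈ Finset.range L, N i = M := by
        rw [hM, ← Fin.sum_univ_eq_sum_range N L]
        apply Finset.sum_congr rfl
        intro i _
        apply congrArg n
        apply Fin.ext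
        exact Nat.mod_eq_of_lt i.isLt
      have hSmul : ∀ k : ℕ, S (k * L) = k • M := by
        intro k
        induction k with
        | zero => simp [hS]
        | succ k ih =>
          have he : (k + 1) * L = k * L + L := by ring
          rw [he, hS]
          simp only
          rw [Finset.sum_range_add]
          have : ∑ i ∈ Finset.range L, N (k * L + i) = M := by
            rw [← hMsum]
            exact Finset.sum_congr rfl fun i hi => hper k i (Finset.mem_range.mp hi)
          rw [this]
          rw [hS] at ih
          simp only at ih
          rw [ih, succ_nsmul]
      have hq0 : ∀ k : ℕ, S (k * L) +ᵥ p (idx (k * L)) = (k • M) +ᵥ p (idx 0) := by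
        intro k
        rw [hSmul k]
        congr 2
        apply Fin.ext
        show (k * L) % L = 0 % L
        simp [Nat.mul_mod_left]
      have key : ∀ a b : ℕ, a ≤ b →
          S (a * L) +ᵥ p (idx (a * L)) = S (b * L) +ᵥ p (idx (b * L)) → a = b := by
        intro a b hab h
        rw [hq0 a, hq0 b] at h
        have hb : b = (b - a) + a := by omega
        rw [hb, add_nsmul, ← vadd_vadd] at h
        have h0 : (b - a) • M = 0 := hfree _ _ h.symm
        have hba : b - a = 0 := by
          by_contra hcne
          apply hsum
          funext i
          have h2 : ((b - a : ℕ) : ℤ) * M i = 0 := by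
            simpa [nsmul_eq_mul] using congrFun h0 i
          rcases mul_eq_zero.mp h2 with h3 | h3
          · exact absurd (Nat.cast_eq_zero.mp h3) hcne
          · simpa using h3
        omega
      have hinj2 : Function.Injective fun k : ℕ => S (k * L) +ᵥ p (idx (k * L)) := by
        intro a b h
        rcases le_total a b with hab | hab
        · exact key a b hab h
        · exact (key b a hab h.symm).symm
      exact (Set.infinite_range_of_injective hinj2).mono
        (by rintro x ⟨k, rfl⟩; exact ⟨k * L, rfl⟩)
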